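/- Let n ≥ 2 and c₁,…,cₙ be positive integers. If N < (∏_j c_j)/(Σ_j c_j), then the map Φ : (ℝ^{N×c₁} × ⋯ × ℝ^{N×cₙ}) → ℝ^{c₁×⋯×cₙ} sending (G¹,…,Gⁿ) to the tensor T with T_{a₁,…,aₙ} = Σ_{i=1}^N ∏_{j=1}^n G^j_{i,a_j} is not surjective. -/
import Mathlib

open MeasureTheory Module Set

theorem stmt_13 (n N : ℕ) (hn : 2 ≤ n) (c : Fin n → ℕ) (hc : ∀ j, 0 < c j)
    (hN : (N : ℝ) < (∏ j, (c j : ℝ)) / (∑ j, (c j : ℝ))) :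
    ¬ Function.Surjective
      (fun (G : (j : Fin n) → Matrix (Fin N) (Fin (c j)) ℝ)
          (a : (j : Fin n) → Fin (c j)) =>
        ∑ i : Fin N, ∏ j : Fin n, G j i (a j)) := by
  intro hsurj
  have hsurj' : Function.Surjective
      (fun (G : (j : Fin n) → Fin N → Fin (c j) → ℝ)
          (a : (j : Fin n) → Fin (c j)) =>
        ∑ i : Fin N, ∏ j : Fin n, G j i (a j)) := hsurj
  set P := (j : Fin n) → Fin N → Fin (c j) → ℝ with hP
  set E := ((j : Fin n) → Fin (c j)) → ℝ with hE
  set Φ : P → E := fun G a => ∑ i : Fin N, ∏ j : Fin n, G j i (a j) with hΦdef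
  -- dimension count
  haveI : Nonempty (Fin n) := ⟨⟨0, by omega⟩⟩
  have hspos : (0:ℝ) < ∑ j, (c j : ℝ) :=
    Finset.sum_pos (fun j _ => by exact_mod_cast hc j) Finset.univ_nonempty
  have hlt : N * ∑ j, c j < ∏ j, c j := by
    have := (lt_div_iff₀ hspos).mp hN
    exact_mod_cast this
  have hdP : finrank ℝ P = ∑ j, N * c j := by
    rw [finrank_pi_fintype]
    congr 1
    ext j
    rw [finrank_pi_fintype]
    simp [Module.finrank_fintype_fun_eq_card]
  have hdE : finrank ℝ E = ∏ j, c j := by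
    rw [Module.finrank_fintype_fun_eq_card, Fintype.card_pi]
    simp
  have hdlt : finrank ℝ P < finrank ℝ E := by
    rw [hdP, hdE, ← Finset.mul_sum]
    exact hlt
  -- surjective linear map E →ₗ P
  let L0 : (Fin (finrank ℝ E) → ℝ) →ₗ[ℝ] (Fin (finrank ℝ P) → ℝ) :=
    LinearMap.funLeft ℝ ℝ (Fin.castLE hdlt.le)
  have hL0 : Function.Surjective L0 :=
    LinearMap.funLeft_surjective_of_injective ℝ ℝ _ (Fin.castLE_injective _)
  let L : E →ₗ[ℝ] P :=
    ((Module.finBasis ℝ P).equivFun.symm.toLinearMap.comp L0).comp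
      (Module.finBasis ℝ E).equivFun.toLinearMap
  have hL : Function.Surjective L :=
    ((Module.finBasis ℝ P).equivFun.symm.surjective.comp hL0).comp
      (Module.finBasis ℝ E).equivFun.surjective
  let Lc : E →L[ℝ] P := L.toContinuousLinearMap
  -- Φ is differentiable
  have hΦ : Differentiable ℝ Φ := by
    apply differentiable_pi.mpr
    intro a
    apply Differentiable.fun_sum
    intro i _
    intro x
    exact (HasFDerivAt.finset_prod (fun j _ =>
      (((ContinuousLinearMap.proj (R := ℝ) (φ := fun _ : Fin (c j) => ℝ) (a j)).comp
      ((ContinuousLinearMap.proj (R := ℝ) (φ := fun _ : Fin N => Fin (c j) → ℝ) i).comp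
        (ContinuousLinearMap.proj (R := ℝ) (φ := fun j => Fin N → Fin (c j) → ℝ) j))).hasFDerivAt))).differentiableAt
  -- the composed map
  set f : E → E := Φ ∘ Lc with hf
  have hfd : ∀ x : E, HasFDerivAt f ((fderiv ℝ Φ (Lc x)).comp Lc) x := fun x =>
    ((hΦ (Lc x)).hasFDerivAt.comp x Lc.hasFDerivAt)
  have hdet : ∀ x : E, ((fderiv ℝ Φ (Lc x)).comp Lc).det = 0 := by
    intro x
    by_contra h
    have hsurjlin : Function.Surjective
        (((fderiv ℝ Φ (Lc x)).comp Lc : E →L[ℝ] E) : E →ₗ[ℝ] E) :=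
      (LinearMap.equivOfDetNeZero _ h).surjective
    have htop : LinearMap.range (((fderiv ℝ Φ (Lc x)).comp Lc : E →L[ℝ] E) : E →ₗ[ℝ] E) = ⊤ :=
      LinearMap.range_eq_top.mpr hsurjlin
    have hle : LinearMap.range (((fderiv ℝ Φ (Lc x)).comp Lc : E →L[ℝ] E) : E →ₗ[ℝ] E)
        ≤ LinearMap.range ((fderiv ℝ Φ (Lc x) : P →L[ℝ] E) : P →ₗ[ℝ] E) := by
      rintro y ⟨z, rfl⟩
      exact ⟨Lc z, rfl⟩
    have h1 : finrank ℝ E ≤ finrank ℝ P := by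
      calc finrank ℝ E = finrank ℝ (⊤ : Submodule ℝ E) := (finrank_top ℝ E).symm
        _ = finrank ℝ (LinearMap.range (((fderiv ℝ Φ (Lc x)).comp Lc : E →L[ℝ] E) : E →ₗ[ℝ] E)) := by
            rw [htop]
        _ ≤ finrank ℝ (LinearMap.range ((fderiv ℝ Φ (Lc x) : P →L[ℝ] E) : P →ₗ[ℝ] E)) :=
            Submodule.finrank_mono hle
        _ ≤ finrank ℝ P := LinearMap.finrank_range_le _
    exact absurd h1 (not_le.mpr hdlt)
  have himg : volume (f '' univ) = 0 :=
    addHaar_image_eq_zero_of_det_fderivWithin_eq_zero volume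
      (fun x _ => (hfd x).hasFDerivWithinAt) (fun x _ => hdet x)
  have hfsurj : Function.Surjective f := hsurj'.comp hL
  rw [Set.image_univ, hfsurj.range_eq] at himg
  exact absurd himg (isOpen_univ.measure_pos volume Set.univ_nonempty).ne'
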